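/- arXiv:2403.14556 — 2 statements merged into one kernel-verified Lean document; each statement's English description precedes it below -/
import Mathlib

section
/- The map from exact-cover solutions of an X3C instance to feasible solutions of the constructed RCAP instance, and the map back, are mutually inverse on the level of yes-instances: the X3C instance (X, D) with |X| = 3q admits an exact cover A ⊆ D with |A| = q if and only if the constructed RCAP instance admits a feasible solution. -/
theorem stmt_15 {α : Type*} [DecidableEq α] (q : ℕ) (X : Finset α)
    (D : Finset (Finset α))
    (hX : X.card = 3 * q)
    (hD : ∀ d ∈ D, d.card = 3 ∧ d ⊆ X) :
    (∃ A ⊆ D, A.card = q ∧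
      (∀ s ∈ A, ∀ t ∈ A, s ≠ t → Disjoint s t) ∧ A.sup id = X) ↔
    (∃ (M : Finset α → Bool) (u : α → Finset α),
      (D.filter (fun d => M d = true)).card = q ∧
      ∀ x ∈ X, u x ∈ D ∧ x ∈ u x ∧ M (u x) = true) := by
  classical
  constructor
  · rintro ⟨A, hAD, hAq, hdisj, hsup⟩
    refine ⟨fun d => decide (d ∈ A), fun x =>
      if h : ∃ s ∈ A, x ∈ s then h.choose else ∅, ?_, ?_⟩
    · have : D.filter (fun d => decide (d ∈ A) = true) = A := by
        ext d
        simp only [Finset.mem_filter, decide_eq_true_eq]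
        exact ⟨fun h => h.2, fun h => ⟨hAD h, h⟩⟩
      rw [this, hAq]
    · intro x hx
      have hx' : ∃ s ∈ A, x ∈ s := by
        rw [← hsup] at hx
        simpa using Finset.mem_sup.mp hx
      obtain ⟨hs, hxs⟩ := hx'.choose_spec
      simp only [dif_pos hx']
      exact ⟨hAD hs, hxs, by simpa using hs⟩
  · rintro ⟨M, u, hq, hu⟩
    set A := D.filter (fun d => M d = true) with hA
    have hAD : A ⊆ D := Finset.filter_subset _ _
    have hsub : A.sup id ⊆ X := by
      intro x hx
      obtain ⟨d, hd, hxd⟩ := Finset.mem_sup.mp hx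
      exact (hD d (hAD hd)).2 hxd
    have hsup : A.sup id = X := by
      refine Finset.Subset.antisymm hsub fun x hx => ?_
      obtain ⟨h1, h2, h3⟩ := hu x hx
      exact Finset.mem_sup.mpr ⟨u x, Finset.mem_filter.mpr ⟨h1, h3⟩, h2⟩
    refine ⟨A, hAD, hq, ?_, hsup⟩
    intro s hs t ht hst
    by_contra hnd
    obtain ⟨x, hxs, hxt⟩ := Finset.not_disjoint_iff.mp hnd
    -- counting argument
    have hq1 : 1 ≤ q := by
      rw [← hq]
      exact Finset.card_pos.mpr ⟨s, hs⟩
    have hcard3 : ∀ d ∈ A, (id d).card = 3 := fun d hd => (hD d (hAD hd)).1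
    have hbi : A.sup id = A.biUnion id := by
      ext y; simp [Finset.mem_sup]
    have hB : x ∈ (A.erase s).biUnion id := by
      exact Finset.mem_biUnion.mpr ⟨t, Finset.mem_erase.mpr ⟨hst.symm, ht⟩, hxt⟩
    have hins : A = insert s (A.erase s) := (Finset.insert_erase hs).symm
    have hle : ((A.erase s).biUnion id).card ≤ 3 * (q - 1) := by
      calc ((A.erase s).biUnion id).card ≤ ∑ d ∈ A.erase s, (id d).card :=
            Finset.card_biUnion_le
        _ = ∑ d ∈ A.erase s, 3 := by
            refine Finset.sum_congr rfl fun d hd => hcard3 d (Finset.mem_of_mem_erase hd)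
        _ = 3 * (q - 1) := by
            rw [Finset.sum_const, Finset.card_erase_of_mem hs, hq, smul_eq_mul, mul_comm]
    have hinter : 1 ≤ (s ∩ (A.erase s).biUnion id).card :=
      Finset.card_pos.mpr ⟨x, Finset.mem_inter.mpr ⟨hxs, hB⟩⟩
    have hkey : (A.biUnion id).card < 3 * q := by
      conv_lhs => rw [hins]
      rw [Finset.biUnion_insert]; simp only [id_eq]
      have h1 := Finset.card_union_add_card_inter (s : Finset α) ((A.erase s).biUnion id)
      have hs3 : s.card = 3 := (hD s (hAD hs)).1
      omega
    rw [← hbi, hsup, hX] at hkey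
    omega
end

section
/- Let costs take only values 1 and 2: each element x of a 3q-element set X is assigned some d ∈ D with x ∈ d, at cost 1 if d ∈ T and cost 2 otherwise, where |T| = q and all members of D have size 3. Then the minimum possible total cost over all assignments u and all choices of T of size q is 3q if and only if X admits an exact cover by q members of D, and otherwise the minimum total cost is at least 3q + 1. -/
theorem stmt_16 {α : Type*} [DecidableEq α] (q : ℕ) (X : Finset α)
    (D : Finset (Finset α))
    (hX : X.card = 3 * q)
    (hD : ∀ d ∈ D, d.card = 3 ∧ d ⊆ X)
    (hcov : ∀ x ∈ X, ∃ d ∈ D, x ∈ d) :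
    (∀ T ⊆ D, T.card = q → ∀ u : α → Finset α, (∀ x ∈ X, u x ∈ D ∧ x ∈ u x) →
        3 * q ≤ ∑ x ∈ X, (if u x ∈ T then 1 else 2)) ∧
    ((∃ T ⊆ D, T.card = q ∧ ∃ u : α → Finset α,
        (∀ x ∈ X, u x ∈ D ∧ x ∈ u x) ∧
        (∑ x ∈ X, (if u x ∈ T then 1 else 2)) = 3 * q) ↔
      (∃ A ⊆ D, A.card = q ∧
        (∀ s ∈ A, ∀ t ∈ A, s ≠ t → Disjoint s t) ∧ A.sup id = X)) ∧
    (¬(∃ A ⊆ D, A.card = q ∧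
        (∀ s ∈ A, ∀ t ∈ A, s ≠ t → Disjoint s t) ∧ A.sup id = X) →
      ∀ T ⊆ D, T.card = q → ∀ u : α → Finset α, (∀ x ∈ X, u x ∈ D ∧ x ∈ u x) →
        3 * q + 1 ≤ ∑ x ∈ X, (if u x ∈ T then 1 else 2)) := by
  classical
  have key1 : ∀ T ⊆ D, T.card = q → ∀ u : α → Finset α, (∀ x ∈ X, u x ∈ D ∧ x ∈ u x) →
      3 * q ≤ ∑ x ∈ X, (if u x ∈ T then 1 else 2) := by
    intro T hT hTq u hu
    calc 3 * q = ∑ _x ∈ X, 1 := by simp [hX]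
    _ ≤ _ := Finset.sum_le_sum (fun x _ => by split <;> omega)
  have key2 : (∃ T ⊆ D, T.card = q ∧ ∃ u : α → Finset α,
        (∀ x ∈ X, u x ∈ D ∧ x ∈ u x) ∧
        (∑ x ∈ X, (if u x ∈ T then 1 else 2)) = 3 * q) ↔
      (∃ A ⊆ D, A.card = q ∧
        (∀ s ∈ A, ∀ t ∈ A, s ≠ t → Disjoint s t) ∧ A.sup id = X) := by
    constructor
    · rintro ⟨T, hTD, hTq, u, hu, hsum⟩
      have hall : ∀ x ∈ X, u x ∈ T := by
        by_contra h
        push_neg at h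
        obtain ⟨x0, hx0, hx0T⟩ := h
        have hlt : (∑ _x ∈ X, 1) < ∑ x ∈ X, (if u x ∈ T then 1 else 2) := by
          apply Finset.sum_lt_sum (fun x _ => by split <;> omega)
          exact ⟨x0, hx0, by simp [hx0T]⟩
        simp [hX, hsum] at hlt
      have hsup : T.sup id = X := by
        apply subset_antisymm (Finset.sup_le fun d hd => (hD d (hTD hd)).2)
        exact fun x hx => Finset.mem_sup.mpr ⟨u x, hall x hx, (hu x hx).2⟩
      refine ⟨T, hTD, hTq, ?_, hsup⟩
      intro s hs t ht hst
      rw [Finset.disjoint_left]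
      intro x hxs hxt
      have hq1 : 1 ≤ q := hTq ▸ Finset.card_pos.mpr ⟨s, hs⟩
      set B := T.erase s with hB
      have hBcard : B.card = q - 1 := by rw [hB, Finset.card_erase_of_mem hs, hTq]
      have hsplit : T.sup id = s ∪ B.sup id := by
        conv_lhs => rw [← Finset.insert_erase hs]
        rw [Finset.sup_insert]; rfl
      have hBle : (B.sup id).card ≤ 3 * (q - 1) := by
        rw [Finset.sup_eq_biUnion]
        calc (B.biUnion id).card ≤ ∑ d ∈ B, (id d).card := Finset.card_biUnion_le
        _ = ∑ _d ∈ B, 3 := Finset.sum_congr rfl (fun d hd =>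
            (hD d (hTD (Finset.mem_of_mem_erase hd))).1)
        _ = 3 * (q - 1) := by rw [Finset.sum_const, hBcard]; ring
      have hxB : x ∈ s ∩ B.sup id := by
        refine Finset.mem_inter.mpr ⟨hxs, Finset.mem_sup.mpr ⟨t, ?_, hxt⟩⟩
        exact Finset.mem_erase.mpr ⟨fun h => hst h.symm, ht⟩
      have hinter : 1 ≤ (s ∩ B.sup id).card := Finset.card_pos.mpr ⟨x, hxB⟩
      have hcu := Finset.card_union_add_card_inter s (B.sup id)
      have hscard : s.card = 3 := (hD s (hTD hs)).1
      have hXc : (s ∪ B.sup id).card = 3 * q := by rw [← hsplit, hsup, hX]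
      omega
    · rintro ⟨A, hAD, hAq, hdisj, hsup⟩
      refine ⟨A, hAD, hAq, fun x => if h : ∃ d ∈ A, x ∈ d then h.choose else ∅, ?_, ?_⟩
      · intro x hx
        have hx' : x ∈ A.sup id := hsup ▸ hx
        obtain ⟨d, hd, hxd⟩ := Finset.mem_sup.mp hx'
        have h : ∃ d ∈ A, x ∈ d := ⟨d, hd, hxd⟩
        simp only [dif_pos h]
        exact ⟨hAD h.choose_spec.1, h.choose_spec.2⟩
      · rw [Finset.sum_congr rfl (g := fun _ => 1)]
        · simp [hX]
        · intro x hx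
          have hx' : x ∈ A.sup id := hsup ▸ hx
          obtain ⟨d, hd, hxd⟩ := Finset.mem_sup.mp hx'
          have h : ∃ d ∈ A, x ∈ d := ⟨d, hd, hxd⟩
          simp only [dif_pos h, if_pos h.choose_spec.1]
  refine ⟨key1, key2, ?_⟩
  intro hno T hT hTq u hu
  have h1 := key1 T hT hTq u hu
  by_contra hc
  push_neg at hc
  exact hno (key2.mp ⟨T, hT, hTq, u, hu, by omega⟩)
end
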